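/- arXiv:2405.05662 — 4 statements merged into one kernel-verified Lean document; each statement's English description precedes it below -/
import Mathlib

section
/- The relation ∼ defined on suffixes by: o ∼ õ iff for the largest common suffix σ of o and õ, every suffix ô having suffix σ is belief-equivalent to o, is an equivalence relation, given that belief-equivalence ∼_b is an equivalence relation. -/
/-- `σ` is the largest common suffix of `o` and `o'`. -/
def IsLCS {O : Type*} (σ o o' : List O) : Prop :=
  σ <:+ o ∧ σ <:+ o' ∧ ∀ τ : List O, τ <:+ o → τ <:+ o' → τ <:+ σ

/-- Clustered sliding window equivalence: `o ∼ o'` iff for the largest common suffix `σ`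
of `o` and `o'`, every length-`ℓ` string ending in `σ` is belief-equivalent to `o`. -/
def clusterSim {O : Type*} (ℓ : ℕ) (rb : List O → List O → Prop)
    (o o' : List O) : Prop :=
  ∀ σ : List O, IsLCS σ o o' →
    ∀ oh : List O, oh.length = ℓ → σ <:+ oh → rb o oh

lemma exists_isLCS {O : Type*} (o o' : List O) : ∃ σ, IsLCS σ o o' := by
  classical
  have hex : ∃ k, o.drop k <:+ o' := ⟨o.length, by simp⟩
  refine ⟨o.drop (Nat.find hex), List.drop_suffix _ _, Nat.find_spec hex, ?_⟩
  intro τ hτo hτo'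
  obtain ⟨pre, hpre⟩ := hτo
  have hd : o.drop pre.length = τ := by
    rw [← hpre]; simp
  have hk : Nat.find hex ≤ pre.length := Nat.find_min' hex (by rw [hd]; exact hτo')
  have : (o.drop (Nat.find hex)).drop (pre.length - Nat.find hex) = τ := by
    rw [List.drop_drop, Nat.add_sub_cancel' hk, hd]
  rw [← this]
  exact List.drop_suffix _ _

lemma isLCS_symm {O : Type*} {σ o o' : List O} (h : IsLCS σ o o') : IsLCS σ o' o :=
  ⟨h.2.1, h.1, fun τ h1 h2 => h.2.2 τ h2 h1⟩

theorem stmt_2 {O : Type*} (ℓ : ℕ) (rb : List O → List O → Prop)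
    (hrefl : ∀ o : List O, o.length = ℓ → rb o o)
    (hsymm : ∀ o o' : List O, o.length = ℓ → o'.length = ℓ → rb o o' → rb o' o)
    (htrans : ∀ o o' o'' : List O, o.length = ℓ → o'.length = ℓ → o''.length = ℓ →
      rb o o' → rb o' o'' → rb o o'') :
    (∀ o : List O, o.length = ℓ → clusterSim ℓ rb o o) ∧
    (∀ o o' : List O, o.length = ℓ → o'.length = ℓ →
      clusterSim ℓ rb o o' → clusterSim ℓ rb o' o) ∧
    (∀ o o' o'' : List O, o.length = ℓ → o'.length = ℓ → o''.length = ℓ →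
      clusterSim ℓ rb o o' → clusterSim ℓ rb o' o'' → clusterSim ℓ rb o o'') := by
  refine ⟨?_, ?_, ?_⟩
  · -- reflexivity
    intro o ho σ hσ oh hoh hsuf
    have hσo : σ = o := hσ.1.eq_of_length (le_antisymm hσ.1.length_le
      (hσ.2.2 o (List.suffix_refl o) (List.suffix_refl o)).length_le)
    subst hσo
    have : σ = oh := hsuf.eq_of_length (by rw [ho, hoh])
    subst this
    exact hrefl _ ho
  · -- symmetry
    intro o o' ho ho' h σ hσ oh hoh hsuf
    have hσ' := isLCS_symm hσ
    have h1 : rb o oh := h σ hσ' oh hoh hsuf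
    have h2 : rb o o' := h σ hσ' o' ho' hσ.1
    exact htrans o' o oh ho' ho hoh (hsymm o o' ho ho' h2) h1
  · -- transitivity
    intro o o' o'' ho ho' ho'' h1 h2 σ hσ oh hoh hsuf
    obtain ⟨σ1, hσ1⟩ := exists_isLCS o o'
    obtain ⟨σ2, hσ2⟩ := exists_isLCS o' o''
    rcases List.suffix_or_suffix_of_suffix hσ1.2.1 hσ2.1 with hc | hc
    · -- σ1 <:+ σ2, so σ1 <:+ o'' and σ1 <:+ σ
      have hσ1σ : σ1 <:+ σ := hσ.2.2 σ1 hσ1.1 (hc.trans hσ2.2.1)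
      exact h1 σ1 hσ1 oh hoh (hσ1σ.trans hsuf)
    · -- σ2 <:+ σ1, so σ2 <:+ o and σ2 <:+ σ
      have hσ2σ : σ2 <:+ σ := hσ.2.2 σ2 (hc.trans hσ1.1) hσ2.2.1
      have ha : rb o' oh := h2 σ2 hσ2 oh hoh (hσ2σ.trans hsuf)
      have hb : rb o' o := h2 σ2 hσ2 o ho (hc.trans hσ1.1)
      exact htrans o o' oh ho ho' hoh (hsymm o' o ho' ho hb) ha
end

section
/- Each equivalence class of the relation ∼ (clustered sliding window memory) consists precisely of all suffixes sharing some fixed common suffix. That is, for any equivalence class c of ∼ there exists a string σ such that c = { o ∈ O^ℓ : o ends in σ }. -/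
theorem stmt_3 {O : Type*} (ℓ : ℕ) (rb : List O → List O → Prop)
    (hrefl : ∀ o : List O, o.length = ℓ → rb o o)
    (hsymm : ∀ o o' : List O, o.length = ℓ → o'.length = ℓ → rb o o' → rb o' o)
    (htrans : ∀ o o' o'' : List O, o.length = ℓ → o'.length = ℓ → o''.length = ℓ →
      rb o o' → rb o' o'' → rb o o'')
    (hsimrefl : ∀ o : List O, o.length = ℓ → clusterSim ℓ rb o o)
    (hsimsymm : ∀ o o' : List O, o.length = ℓ → o'.length = ℓ →
      clusterSim ℓ rb o o' → clusterSim ℓ rb o' o)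
    (hsimtrans : ∀ o o' o'' : List O, o.length = ℓ → o'.length = ℓ → o''.length = ℓ →
      clusterSim ℓ rb o o' → clusterSim ℓ rb o' o'' → clusterSim ℓ rb o o'') :
    ∀ o : List O, o.length = ℓ → ∃ σ : List O, σ <:+ o ∧
      ∀ o' : List O, o'.length = ℓ → (clusterSim ℓ rb o o' ↔ σ <:+ o') := by
  classical
  intro o ho
  -- a suffix is a drop
  have hsufdrop : ∀ s : List O, s <:+ o → s = o.drop (o.length - s.length) := by
    rintro s ⟨t, rfl⟩
    simp [List.drop_left']
  -- drops are antitone suffixes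
  have hmono : ∀ i j : ℕ, i ≤ j → o.drop j <:+ o.drop i := by
    intro i j hij
    have h1 : o.drop j = (o.drop i).drop (j - i) := by
      rw [List.drop_drop]; congr 1; omega
    rw [h1]
    exact List.drop_suffix _ _
  -- the key predicate
  set P : ℕ → Prop := fun k => ∀ oh : List O, oh.length = ℓ → o.drop k <:+ oh → rb o oh
    with hPdef
  have hP0 : P 0 := by
    intro oh hl hs
    simp only [List.drop_zero] at hs
    have : o = oh := hs.eq_of_length (by omega)
    rw [← this]; exact hrefl o ho
  set k0 : ℕ := Nat.findGreatest P ℓ with hk0def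
  have hPk0 : P k0 := Nat.findGreatest_spec (Nat.zero_le ℓ) hP0
  refine ⟨o.drop k0, List.drop_suffix _ _, ?_⟩
  intro o' ho'
  constructor
  · intro hsim
    -- construct the LCS of o and o'
    have hex : ∃ j, o.drop j <:+ o' := ⟨o.length, by simp⟩
    set j : ℕ := Nat.find hex with hjdef
    have hj : o.drop j <:+ o' := Nat.find_spec hex
    have hlcs : IsLCS (o.drop j) o o' := by
      refine ⟨List.drop_suffix _ _, hj, ?_⟩
      intro ρ hρo hρo'
      have hρ : ρ = o.drop (o.length - ρ.length) := hsufdrop ρ hρo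
      have hjle : j ≤ o.length - ρ.length := Nat.find_min' hex (by rw [← hρ]; exact hρo')
      rw [hρ]
      exact hmono j _ hjle
    have hPj : P j := fun oh hl hs => hsim (o.drop j) hlcs oh hl hs
    have hjℓ : j ≤ ℓ := by
      have := Nat.find_min' hex (show o.drop o.length <:+ o' by simp)
      omega
    have hjk0 : j ≤ k0 := Nat.le_findGreatest hjℓ hPj
    exact (hmono j k0 hjk0).trans hj
  · intro hsuf
    intro τ hlcs oh hl hs
    have hστ : o.drop k0 <:+ τ := hlcs.2.2 _ (List.drop_suffix _ _) hsuf
    exact hPk0 oh hl (hστ.trans hs)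
end

section
/- Let prog(φ) = t·L + i·(L/n) + c + p·(L/n − K) be the progress of a node described by (t, i, c, p) with 0 ≤ c ≤ K, 0 ≤ p ≤ 1, and K ≤ L/n. If a child node is obtained by (a) incrementing c to c+1 (with p non-decreasing) while c+1 < K stays within the same (t,i), or (b) completing agent i (c = K−1 → i+1, c=0, p=0) with i+1 < n, or (c) completing the stage (c = K−1, i = n−1 → t+1, i=0, c=0, p=0), then in all cases prog(child) ≥ prog(parent) + 1. -/
/-- Progress measure of a partial policy described by stage `t`, agent `i`,
cluster count `c`, probability `p` of the first `c` clusters, and number `K`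
of clusters of the current agent in the current stage. -/
noncomputable def prog (L : ℝ) (n : ℕ) (t i c : ℕ) (p : ℝ) (K : ℕ) : ℝ :=
  (t : ℝ) * L + (i : ℝ) * (L / n) + (c : ℝ) + p * (L / n - (K : ℝ))

theorem stmt_5 (L : ℝ) (n t i c K : ℕ) (p : ℝ)
    (hn : 1 ≤ n) (hL : 0 < L) (hi : i < n) (hc : c < K)
    (hp0 : 0 ≤ p) (hp1 : p ≤ 1) (hK : (K : ℝ) ≤ L / n) :
    (c + 1 < K → ∀ p' : ℝ, p ≤ p' → p' ≤ 1 →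
      prog L n t i (c + 1) p' K ≥ prog L n t i c p K + 1) ∧
    (c = K - 1 → i + 1 < n → ∀ K' : ℕ, (K' : ℝ) ≤ L / n →
      prog L n t (i + 1) 0 0 K' ≥ prog L n t i c p K + 1) ∧
    (c = K - 1 → i = n - 1 → ∀ K' : ℕ, (K' : ℝ) ≤ L / n →
      prog L n (t + 1) 0 0 0 K' ≥ prog L n t i c p K + 1) := by
  have hcK : (c : ℝ) + 1 ≤ K := by exact_mod_cast hc
  refine ⟨?_, ?_, ?_⟩
  · intro _ p' hpp' _
    simp only [prog]
    push_cast
    nlinarith [mul_nonneg (sub_nonneg.2 hpp') (sub_nonneg.2 hK)]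
  · intro hcEq hi1 K' _
    have hK1 : 1 ≤ K := Nat.one_le_of_lt (Nat.lt_of_le_of_lt (Nat.zero_le c) hc)
    have hcR : (c : ℝ) = (K : ℝ) - 1 := by
      subst hcEq; push_cast [hK1]; ring
    simp only [prog]
    push_cast
    nlinarith [mul_nonneg hp0 (sub_nonneg.2 hK), mul_le_mul_of_nonneg_left (sub_nonneg.2 hK) hp0]
  · intro hcEq hiEq K' _
    have hK1 : 1 ≤ K := Nat.one_le_of_lt (Nat.lt_of_le_of_lt (Nat.zero_le c) hc)
    have hcR : (c : ℝ) = (K : ℝ) - 1 := by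
      subst hcEq; push_cast [hK1]; ring
    have hiR : (i : ℝ) = (n : ℝ) - 1 := by
      subst hiEq; push_cast [hn]; ring
    have hnR : (0:ℝ) < n := by exact_mod_cast Nat.lt_of_lt_of_le Nat.zero_lt_one hn
    have hLn : (n : ℝ) * (L / n) = L := by field_simp
    simp only [prog]
    push_cast
    nlinarith [mul_le_mul_of_nonneg_left (sub_nonneg.2 hK) hp0]
end

section
/- Under the assumption L ≥ n·K for all cluster counts K, if every parent-child transition increases prog by at least 1, prog starts at value ≥ 0, and prog of any node is at most h·L with equality iff the node is a leaf (fully specified policy), then an A* search that prunes a node φ whenever prog(φ) < N (N = number of nodes expanded so far) and starts with one unpruned node in the queue maintains the invariant that, until a leaf is expanded, the queue always contains a node φ with prog(φ) ≥ N; consequently a leaf is found within h·L expansions. -/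
/-- One step of the pruned A* search: either expand a node `φ` of the queue with
`prog φ ≥ N` that is not a leaf (replacing it by its children and incrementing the
expansion counter), or prune a node with `prog φ < N`. -/
def AStarStep {Node : Type*} [DecidableEq Node] (children : Node → Finset Node)
    (prog : Node → ℝ) (s s' : Multiset Node × ℕ) : Prop :=
  (∃ φ ∈ s.1, ((s.2 : ℝ) ≤ prog φ) ∧ children φ ≠ ∅ ∧
    s' = (s.1.erase φ + (children φ).val, s.2 + 1)) ∨
  (∃ φ ∈ s.1, (prog φ < (s.2 : ℝ)) ∧ s' = (s.1.erase φ, s.2))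

theorem stmt_6 {Node : Type*} [DecidableEq Node] (children : Node → Finset Node)
    (prog : Node → ℝ) (root : Node) (h L : ℕ)
    (hroot : 0 ≤ prog root)
    (hchild : ∀ φ ψ, ψ ∈ children φ → prog φ + 1 ≤ prog ψ)
    (hub : ∀ φ, prog φ ≤ ((h * L : ℕ) : ℝ))
    (hleaf : ∀ φ, prog φ = ((h * L : ℕ) : ℝ) ↔ children φ = ∅) :
    ∀ q N, Relation.ReflTransGen (AStarStep children prog) ({root}, 0) (q, N) →
      (∃ φ ∈ q, (N : ℝ) ≤ prog φ) ∧ N ≤ h * L ∧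
        (N = h * L → ∃ φ ∈ q, children φ = ∅) := by
  suffices H : ∀ s, Relation.ReflTransGen (AStarStep children prog) ({root}, 0) s →
      (∃ φ ∈ s.1, (s.2 : ℝ) ≤ prog φ) ∧ s.2 ≤ h * L ∧
        (s.2 = h * L → ∃ φ ∈ s.1, children φ = ∅) by
    intro q N hqN; exact H (q, N) hqN
  intro s hs
  induction hs with
  | refl =>
    refine ⟨⟨root, Multiset.mem_singleton_self root, by simpa using hroot⟩, Nat.zero_le _, ?_⟩
    intro h0
    refine ⟨root, Multiset.mem_singleton_self root, ?_⟩
    rw [← hleaf]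
    have := hub root
    rw [← h0] at this ⊢
    push_cast at this ⊢
    linarith
  | tail hst hstep ih =>
    rename_i b c
    obtain ⟨⟨χ, hχmem, hχ⟩, hble, hbleaf⟩ := ih
    rcases hstep with ⟨φ, hφmem, hφge, hφne, hc⟩ | ⟨φ, hφmem, hφlt, hc⟩
    · -- expand
      obtain ⟨ψ, hψ⟩ := Finset.nonempty_iff_ne_empty.mpr hφne
      have hψprog : (b.2 : ℝ) + 1 ≤ prog ψ :=
        le_trans (by linarith [hchild φ ψ hψ]) (hchild φ ψ hψ)
      have hψmem : ψ ∈ c.1 := by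
        rw [hc]; exact Multiset.mem_add.mpr (Or.inr hψ)
      have hc2 : c.2 = b.2 + 1 := by rw [hc]
      have h1 : (c.2 : ℝ) ≤ prog ψ := by rw [hc2]; push_cast; linarith
      have h2 : c.2 ≤ h * L := by
        have := hub ψ
        have : (c.2 : ℝ) ≤ ((h * L : ℕ) : ℝ) := le_trans h1 this
        exact_mod_cast this
      refine ⟨⟨ψ, hψmem, h1⟩, h2, ?_⟩
      intro hEq
      refine ⟨ψ, hψmem, ?_⟩
      rw [← hleaf]
      have hub' := hub ψ
      have : ((h * L : ℕ) : ℝ) ≤ prog ψ := by rw [← hEq]; exact h1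
      linarith
    · -- prune
      have hχφ : χ ≠ φ := by
        intro hEqn; rw [hEqn] at hχ; linarith
      have hχmem' : χ ∈ c.1 := by
        rw [hc]; exact (Multiset.mem_erase_of_ne hχφ).mpr hχmem
      have hc2 : c.2 = b.2 := by rw [hc]
      refine ⟨⟨χ, hχmem', by rw [hc2]; exact hχ⟩, by rw [hc2]; exact hble, ?_⟩
      intro hEq
      obtain ⟨ρ, hρmem, hρleaf⟩ := hbleaf (hc2 ▸ hEq)
      have hρprog : prog ρ = ((h * L : ℕ) : ℝ) := (hleaf ρ).mpr hρleaf
      have hρφ : ρ ≠ φ := by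
        intro hEqn
        rw [hEqn] at hρprog
        rw [hc2] at hEq
        rw [hEq] at hφlt
        linarith [hφlt.trans_le (le_of_eq hρprog.symm)]
      refine ⟨ρ, ?_, hρleaf⟩
      rw [hc]; exact (Multiset.mem_erase_of_ne hρφ).mpr hρmem
end
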